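/- arXiv:0905.0334 — 5 statements merged into one kernel-verified Lean document; each statement's English description precedes it below -/
import Mathlib

section
/- With the setup of the p:−q resonance invariants on R^4 (z_j = (p_j + i q_j)/√2, π1 = |z1|², π2 = |z2|², π3 = Re(z1^q z2^p), π4 = Im(z1^q z2^p)), the Poisson bracket satisfies {π3, π4} = (1/2) π1^{q−1} π2^{p−1} (−p² π1 − q² π2) on the locus where π1, π2 > 0, i.e. {π3, π4} = (1/2) π1^{q−1} π2^{p−1} (σ p² π1 − q² π2) with σ = −1. -/
open Complex

/-- The standard symplectic Poisson bracket on `ℝ⁴` with coordinates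
`(p₁, q₁, p₂, q₂)`. -/
noncomputable def pbracket (f g : ℝ → ℝ → ℝ → ℝ → ℝ) (P₁ Q₁ P₂ Q₂ : ℝ) : ℝ :=
    deriv (fun y => f P₁ y P₂ Q₂) Q₁ * deriv (fun x => g x Q₁ P₂ Q₂) P₁
  - deriv (fun x => f x Q₁ P₂ Q₂) P₁ * deriv (fun y => g P₁ y P₂ Q₂) Q₁
  + deriv (fun y => f P₁ Q₁ P₂ y) Q₂ * deriv (fun x => g P₁ Q₁ x Q₂) P₂
  - deriv (fun x => f P₁ Q₁ x Q₂) P₂ * deriv (fun y => g P₁ Q₁ P₂ y) Q₂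

/-- Complex coordinate `z = (P + i Q)/√2`. -/
noncomputable def zc (P Q : ℝ) : ℂ := (P + Q * Complex.I) / Real.sqrt 2

lemma zc_devP (Q P : ℝ) : HasDerivAt (fun x : ℝ => zc x Q) (1 / (Real.sqrt 2 : ℂ)) P := by
  have h1 : HasDerivAt (fun x : ℝ => (x : ℂ)) 1 P := by
    simpa using (hasDerivAt_id P).ofReal_comp
  have := (h1.add_const ((Q : ℂ) * Complex.I)).div_const ((Real.sqrt 2 : ℝ) : ℂ)
  simpa [zc] using this

lemma zc_devQ (P Q : ℝ) : HasDerivAt (fun y : ℝ => zc P y) (Complex.I / (Real.sqrt 2 : ℂ)) Q := by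
  have h1 : HasDerivAt (fun y : ℝ => (y : ℂ)) 1 Q := by
    simpa using (hasDerivAt_id Q).ofReal_comp
  have := ((h1.mul_const Complex.I).const_add ((P : ℂ))).div_const ((Real.sqrt 2 : ℝ) : ℂ)
  simpa [zc] using this

lemma deriv_re {F : ℝ → ℂ} {c : ℂ} {x : ℝ} (h : HasDerivAt F c x) :
    deriv (fun t => (F t).re) x = c.re :=
  (Complex.reCLM.hasFDerivAt.comp_hasDerivAt x h).deriv

lemma deriv_im {F : ℝ → ℂ} {c : ℂ} {x : ℝ} (h : HasDerivAt F c x) :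
    deriv (fun t => (F t).im) x = c.im :=
  (Complex.imCLM.hasFDerivAt.comp_hasDerivAt x h).deriv

lemma pow_comp {f : ℝ → ℂ} {c : ℂ} {x : ℝ} (h : HasDerivAt f c x) (n : ℕ) :
    HasDerivAt (fun t => f t ^ n) ((n : ℂ) * f x ^ (n - 1) * c) x := by
  have h1 : HasDerivAt (fun z : ℂ => z ^ n) ((n : ℂ) * f x ^ (n - 1)) (f x) :=
    hasDerivAt_pow n (f x)
  have h2 := (h1.hasFDerivAt.restrictScalars ℝ).comp_hasDerivAt x h
  convert h2 using 1
  · rfl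
  · rfl
  simp [mul_comm]

lemma brk (A : ℂ) :
    (A * (Complex.I / (Real.sqrt 2 : ℂ))).re * (A * (1 / (Real.sqrt 2 : ℂ))).im
      - (A * (1 / (Real.sqrt 2 : ℂ))).re * (A * (Complex.I / (Real.sqrt 2 : ℂ))).im
    = -Complex.normSq A / 2 := by
  have h2 : (Real.sqrt 2 : ℝ) * Real.sqrt 2 = 2 := Real.mul_self_sqrt (by norm_num)
  have hne : (Real.sqrt 2 : ℝ) ≠ 0 := by positivity
  simp only [Complex.mul_re, Complex.mul_im, Complex.div_re, Complex.div_im,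
    Complex.I_re, Complex.I_im, Complex.one_re, Complex.one_im,
    Complex.ofReal_re, Complex.ofReal_im, Complex.normSq_apply]
  field_simp
  ring_nf
  have h4 : (Real.sqrt 2) ^ 2 = 2 := Real.sq_sqrt (by norm_num)
  rw [show (Real.sqrt 2) ^ 4 = ((Real.sqrt 2) ^ 2) ^ 2 by ring, h4]
  ring

/-- for the `p:-q` resonance invariants (`σ = -1`),
`{π₃, π₄} = ½ π₁^{q-1} π₂^{p-1} (−p² π₁ − q² π₂)` on the locus
`π₁, π₂ > 0`. -/
theorem stmt4 (p q : ℕ) (hp : 0 < p) (hq : 0 < q) (hpq : Nat.Coprime p q)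
    (P₁ Q₁ P₂ Q₂ : ℝ)
    (h₁ : 0 < ‖zc P₁ Q₁‖ ^ 2) (h₂ : 0 < ‖zc P₂ Q₂‖ ^ 2) :
    pbracket (fun a b c d => ((zc a b) ^ q * (zc c d) ^ p).re)
             (fun a b c d => ((zc a b) ^ q * (zc c d) ^ p).im) P₁ Q₁ P₂ Q₂
      = (1 / 2) * (‖zc P₁ Q₁‖ ^ 2) ^ (q - 1)
          * (‖zc P₂ Q₂‖ ^ 2) ^ (p - 1)
          * (-(p : ℝ) ^ 2 * ‖zc P₁ Q₁‖ ^ 2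
             - (q : ℝ) ^ 2 * ‖zc P₂ Q₂‖ ^ 2) := by
  set z1 := zc P₁ Q₁ with hz1
  set z2 := zc P₂ Q₂ with hz2
  set A : ℂ := (q : ℂ) * z1 ^ (q - 1) * z2 ^ p with hA
  set B : ℂ := (p : ℂ) * z1 ^ q * z2 ^ (p - 1) with hB
  -- derivatives
  have hP1 : HasDerivAt (fun x : ℝ => (zc x Q₁) ^ q * z2 ^ p)
      (A * (1 / (Real.sqrt 2 : ℂ))) P₁ := by
    have := (pow_comp (zc_devP Q₁ P₁) q).mul_const (z2 ^ p)
    convert this using 1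
    · rfl
    rw [hA]; ring
  have hQ1 : HasDerivAt (fun y : ℝ => (zc P₁ y) ^ q * z2 ^ p)
      (A * (Complex.I / (Real.sqrt 2 : ℂ))) Q₁ := by
    have := (pow_comp (zc_devQ P₁ Q₁) q).mul_const (z2 ^ p)
    convert this using 1
    · rfl
    rw [hA]; ring
  have hP2 : HasDerivAt (fun x : ℝ => z1 ^ q * (zc x Q₂) ^ p)
      (B * (1 / (Real.sqrt 2 : ℂ))) P₂ := by
    have := (pow_comp (zc_devP Q₂ P₂) p).const_mul (z1 ^ q)
    convert this using 1
    · rfl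
    rw [hB]; ring
  have hQ2 : HasDerivAt (fun y : ℝ => z1 ^ q * (zc P₂ y) ^ p)
      (B * (Complex.I / (Real.sqrt 2 : ℂ))) Q₂ := by
    have := (pow_comp (zc_devQ P₂ Q₂) p).const_mul (z1 ^ q)
    convert this using 1
    · rfl
    rw [hB]; ring
  simp only [pbracket]
  rw [deriv_re hQ1, deriv_im hP1, deriv_re hP1, deriv_im hQ1,
      deriv_re hQ2, deriv_im hP2, deriv_re hP2, deriv_im hQ2]
  have e1 := brk A
  have e2 := brk B
  rw [show (A * (Complex.I / (Real.sqrt 2:ℂ))).re * (A * (1 / (Real.sqrt 2:ℂ))).im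
      - (A * (1 / (Real.sqrt 2:ℂ))).re * (A * (Complex.I / (Real.sqrt 2:ℂ))).im
      + (B * (Complex.I / (Real.sqrt 2:ℂ))).re * (B * (1 / (Real.sqrt 2:ℂ))).im
      - (B * (1 / (Real.sqrt 2:ℂ))).re * (B * (Complex.I / (Real.sqrt 2:ℂ))).im
      = -Complex.normSq A / 2 + -Complex.normSq B / 2 by linarith]
  have hnA : Complex.normSq A
      = (q : ℝ) ^ 2 * Complex.normSq z1 ^ (q - 1) * Complex.normSq z2 ^ p := by
    rw [hA, map_mul, map_mul, map_pow, map_pow, Complex.normSq_natCast]; ring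
  have hnB : Complex.normSq B
      = (p : ℝ) ^ 2 * Complex.normSq z1 ^ q * Complex.normSq z2 ^ (p - 1) := by
    rw [hB, map_mul, map_mul, map_pow, map_pow, Complex.normSq_natCast]; ring
  rw [hnA, hnB]
  rw [Complex.sq_norm, Complex.sq_norm]
  set a := Complex.normSq z1
  set b := Complex.normSq z2
  have ha : a ^ q = a ^ (q - 1) * a := by
    rw [← pow_succ, Nat.sub_add_cancel hq]
  have hb : b ^ p = b ^ (p - 1) * b := by
    rw [← pow_succ, Nat.sub_add_cancel hp]
  rw [ha, hb]
  ring
end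

section
/- The function H₂ = p π1 + σ q π2 is a Casimir of the Poisson structure on R^4 generated by the invariants of the p:σq resonance: its Poisson bracket with each of π1, π2, π3, π4 vanishes identically. -/
/-- `H₂ = p π₁ + σ q π₂` is a Casimir of the Poisson
structure on the invariants: given the bracket values
`{π₁,π₂} = 0`, `{π₁,π₃} = q π₄`, `{π₁,π₄} = −q π₃`,
`{π₂,π₃} = −σ p π₄`, `{π₂,π₄} = σ p π₃`,
`{π₃,π₄} = ½ π₁^{q-1} π₂^{p-1} (σ p² π₁ − q² π₂)`
(encoded by an antisymmetric matrix `B i j = {πᵢ, πⱼ}` at the point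
`(π₁,π₂,π₃,π₄)`), the bracket of `H₂` with each `πⱼ`,
namely `p·{π₁,πⱼ} + σ q·{π₂,πⱼ}`, vanishes. -/
theorem stmt5 (p q : ℕ) (hp : 0 < p) (hq : 0 < q) (hpq : Nat.Coprime p q)
    (σ : ℝ) (hσ : σ = 1 ∨ σ = -1)
    (π₁ π₂ π₃ π₄ : ℝ) (B : Fin 4 → Fin 4 → ℝ)
    (hanti : ∀ i j, B i j = -B j i)
    (h12 : B 0 1 = 0)
    (h13 : B 0 2 = q * π₄)
    (h14 : B 0 3 = -(q * π₃))
    (h23 : B 1 2 = -(σ * p * π₄))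
    (h24 : B 1 3 = σ * p * π₃)
    (h34 : B 2 3 = (1 / 2) * π₁ ^ (q - 1) * π₂ ^ (p - 1)
                     * (σ * (p : ℝ) ^ 2 * π₁ - (q : ℝ) ^ 2 * π₂)) :
    ∀ j : Fin 4, (p : ℝ) * B 0 j + σ * q * B 1 j = 0 := by
  have hσ2 : σ * σ = 1 := by rcases hσ with h | h <;> rw [h] <;> ring
  have h00 : B 0 0 = 0 := by have := hanti 0 0; linarith
  have h11 : B 1 1 = 0 := by have := hanti 1 1; linarith
  have h10 : B 1 0 = 0 := by have := hanti 0 1; linarith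
  intro j
  fin_cases j
  · show (p : ℝ) * B 0 0 + σ * q * B 1 0 = 0
    rw [h00, h10]; ring
  · show (p : ℝ) * B 0 1 + σ * q * B 1 1 = 0
    rw [h12, h11]; ring
  · show (p : ℝ) * B 0 2 + σ * q * B 1 2 = 0
    rw [h13, h23]; linear_combination (-(p:ℝ) * q * π₄) * hσ2
  · show (p : ℝ) * B 0 3 + σ * q * B 1 3 = 0
    rw [h14, h24]; linear_combination ((p:ℝ) * q * π₃) * hσ2
end

section
/- For σ = −1 and p = 1, every value (h₂, 0) with h₂ > 0 is a regular value of F = (H₂, ΔH) restricted to its fibre: at every point x of the level set F(x) = (h₂, 0) with h₂ > 0 that is not the origin, the derivative DF(x) has rank 2. -/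
open Complex

set_option maxHeartbeats 1000000

noncomputable def pr1 : (ℝ × ℝ × ℝ × ℝ) →L[ℝ] ℝ :=
  ContinuousLinearMap.fst ℝ ℝ (ℝ × ℝ × ℝ)
noncomputable def pr2 : (ℝ × ℝ × ℝ × ℝ) →L[ℝ] ℝ :=
  (ContinuousLinearMap.fst ℝ ℝ (ℝ × ℝ)).comp (ContinuousLinearMap.snd ℝ ℝ (ℝ × ℝ × ℝ))
noncomputable def pr3 : (ℝ × ℝ × ℝ × ℝ) →L[ℝ] ℝ :=
  ((ContinuousLinearMap.fst ℝ ℝ ℝ).comp (ContinuousLinearMap.snd ℝ ℝ (ℝ × ℝ))).comp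
    (ContinuousLinearMap.snd ℝ ℝ (ℝ × ℝ × ℝ))
noncomputable def pr4 : (ℝ × ℝ × ℝ × ℝ) →L[ℝ] ℝ :=
  ((ContinuousLinearMap.snd ℝ ℝ ℝ).comp (ContinuousLinearMap.snd ℝ ℝ (ℝ × ℝ))).comp
    (ContinuousLinearMap.snd ℝ ℝ (ℝ × ℝ × ℝ))

@[simp] lemma pr1_apply (w : ℝ × ℝ × ℝ × ℝ) : pr1 w = w.1 := rfl
@[simp] lemma pr2_apply (w : ℝ × ℝ × ℝ × ℝ) : pr2 w = w.2.1 := rfl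
@[simp] lemma pr3_apply (w : ℝ × ℝ × ℝ × ℝ) : pr3 w = w.2.2.1 := rfl
@[simp] lemma pr4_apply (w : ℝ × ℝ × ℝ × ℝ) : pr4 w = w.2.2.2 := rfl

noncomputable def ee1 : (ℝ × ℝ × ℝ × ℝ) →L[ℝ] ℂ :=
  Complex.ofRealCLM.comp pr1 + (ContinuousLinearMap.toSpanSingleton ℝ Complex.I).comp pr2

noncomputable def ee2 : (ℝ × ℝ × ℝ × ℝ) →L[ℝ] ℂ :=
  Complex.ofRealCLM.comp pr3 + (ContinuousLinearMap.toSpanSingleton ℝ Complex.I).comp pr4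

@[simp] lemma ee1_apply (w : ℝ × ℝ × ℝ × ℝ) :
    ee1 w = (w.1 : ℂ) + w.2.1 * Complex.I := by
  simp [ee1, ContinuousLinearMap.toSpanSingleton_apply, Complex.real_smul]

@[simp] lemma ee2_apply (w : ℝ × ℝ × ℝ × ℝ) :
    ee2 w = (w.2.2.1 : ℂ) + Complex.I * w.2.2.2 := by
  simp [ee2, ContinuousLinearMap.toSpanSingleton_apply, Complex.real_smul, mul_comm]

/-- for `σ = -1`, `p = 1`: at every non-origin point `x`
of the level set `F(x) = (h₂, 0)` with `h₂ > 0`, the derivative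
`DF(x)` has rank 2 (is surjective). -/
theorem stmt9 (q : ℕ) (hq : 2 ≤ q)
    (h₂ : ℝ) (hh₂ : 0 < h₂)
    (H₂ ΔH : ℝ × ℝ × ℝ × ℝ → ℝ) (F : ℝ × ℝ × ℝ × ℝ → ℝ × ℝ)
    (hH₂ : H₂ = fun v => (1 : ℝ) / 2 * (v.1 ^ 2 + v.2.1 ^ 2)
                  - (q : ℝ) / 2 * (v.2.2.1 ^ 2 + v.2.2.2 ^ 2))
    (hΔH : ΔH = fun v => (((v.1 : ℂ) + v.2.1 * Complex.I) ^ q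
                  * ((v.2.2.1 : ℂ) + Complex.I * v.2.2.2)).re)
    (hF : F = fun v => (H₂ v, ΔH v)) :
    ∀ x : ℝ × ℝ × ℝ × ℝ, x ≠ 0 → F x = (h₂, 0) →
      Function.Surjective (fderiv ℝ F x) := by
  subst hH₂ hΔH hF
  intro x _hx hFx
  rw [Prod.ext_iff] at hFx
  obtain ⟨hH, hΔ⟩ := hFx
  dsimp only at hH hΔ
  set z1 : ℂ := (x.1 : ℂ) + x.2.1 * Complex.I with hz1
  set z2 : ℂ := (x.2.2.1 : ℂ) + Complex.I * x.2.2.2 with hz2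
  -- positivity of |z1|^2
  have hA : (0 : ℝ) < x.1 ^ 2 + x.2.1 ^ 2 := by
    nlinarith [sq_nonneg x.2.2.1, sq_nonneg x.2.2.2, Nat.one_le_cast (α := ℝ) |>.2
      (le_trans (by norm_num) hq)]
  have hz1ne : z1 ≠ 0 := by
    intro h
    have : Complex.normSq z1 = 0 := by rw [h]; simp
    rw [hz1, Complex.normSq_add_mul_I] at this
    nlinarith
  have hwne : z1 ^ q ≠ 0 := pow_ne_zero _ hz1ne
  set w : ℂ := z1 ^ q with hw
  have hB : (0 : ℝ) < w.re ^ 2 + w.im ^ 2 := by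
    have := Complex.normSq_pos.2 hwne
    rwa [Complex.normSq_apply, ← sq, ← sq] at this
  -- derivatives of the four coordinates
  have h1 : HasFDerivAt (fun v : ℝ × ℝ × ℝ × ℝ => v.1) pr1 x := pr1.hasFDerivAt
  have h2 : HasFDerivAt (fun v : ℝ × ℝ × ℝ × ℝ => v.2.1) pr2 x := pr2.hasFDerivAt
  have h3 : HasFDerivAt (fun v : ℝ × ℝ × ℝ × ℝ => v.2.2.1) pr3 x := pr3.hasFDerivAt
  have h4 : HasFDerivAt (fun v : ℝ × ℝ × ℝ × ℝ => v.2.2.2) pr4 x := pr4.hasFDerivAt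
  -- derivative of H₂
  set L1 : (ℝ × ℝ × ℝ × ℝ) →L[ℝ] ℝ :=
    x.1 • pr1 + x.2.1 • pr2 - ((q : ℝ) * x.2.2.1) • pr3 - ((q : ℝ) * x.2.2.2) • pr4 with hL1
  have hd1 : HasFDerivAt
      (fun v : ℝ × ℝ × ℝ × ℝ => (1 : ℝ) / 2 * (v.1 ^ 2 + v.2.1 ^ 2)
        - (q : ℝ) / 2 * (v.2.2.1 ^ 2 + v.2.2.2 ^ 2)) L1 x := by
    have p1 := (hasDerivAt_pow 2 x.1).comp_hasFDerivAt x h1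
    have p2 := (hasDerivAt_pow 2 x.2.1).comp_hasFDerivAt x h2
    have p3 := (hasDerivAt_pow 2 x.2.2.1).comp_hasFDerivAt x h3
    have p4 := (hasDerivAt_pow 2 x.2.2.2).comp_hasFDerivAt x h4
    have := (((p1.add p2).const_mul ((1:ℝ)/2)).sub ((p3.add p4).const_mul ((q:ℝ)/2)))
    refine this.congr_fderiv ?_
    refine ContinuousLinearMap.ext fun v => ?_
    simp [hL1]
    ring
  -- derivative of ΔH
  set L2 : (ℝ × ℝ × ℝ × ℝ) →L[ℝ] ℝ :=
    Complex.reCLM.comp (w • ee2 + z2 • (((q : ℂ) * z1 ^ (q - 1)) • ee1)) with hL2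
  have he1 : HasFDerivAt (fun v : ℝ × ℝ × ℝ × ℝ => (v.1 : ℂ) + v.2.1 * Complex.I) ee1 x := by
    exact ee1.hasFDerivAt.congr_of_eventuallyEq
      (Filter.Eventually.of_forall fun v => (ee1_apply v).symm)
  have he2 : HasFDerivAt (fun v : ℝ × ℝ × ℝ × ℝ => (v.2.2.1 : ℂ) + Complex.I * v.2.2.2) ee2 x := by
    exact ee2.hasFDerivAt.congr_of_eventuallyEq
      (Filter.Eventually.of_forall fun v => (ee2_apply v).symm)
  have hp : HasFDerivAt (fun v : ℝ × ℝ × ℝ × ℝ => ((v.1 : ℂ) + v.2.1 * Complex.I) ^ q)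
      ((((q : ℂ) * z1 ^ (q - 1)) : ℂ) • ee1) x :=
    (hasDerivAt_pow q z1).comp_hasFDerivAt x he1
  have hg : HasFDerivAt
      (fun v : ℝ × ℝ × ℝ × ℝ => ((v.1 : ℂ) + v.2.1 * Complex.I) ^ q
        * ((v.2.2.1 : ℂ) + Complex.I * v.2.2.2))
      (w • ee2 + z2 • (((q : ℂ) * z1 ^ (q - 1)) • ee1)) x := hp.mul he2
  have hd2 : HasFDerivAt
      (fun v : ℝ × ℝ × ℝ × ℝ => (((v.1 : ℂ) + v.2.1 * Complex.I) ^ q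
        * ((v.2.2.1 : ℂ) + Complex.I * v.2.2.2)).re) L2 x :=
    Complex.reCLM.hasFDerivAt.comp x hg
  have hd : HasFDerivAt (fun v : ℝ × ℝ × ℝ × ℝ =>
      ((1 : ℝ) / 2 * (v.1 ^ 2 + v.2.1 ^ 2) - (q : ℝ) / 2 * (v.2.2.1 ^ 2 + v.2.2.2 ^ 2),
        (((v.1 : ℂ) + v.2.1 * Complex.I) ^ q
          * ((v.2.2.1 : ℂ) + Complex.I * v.2.2.2)).re)) (L1.prod L2) x := hd1.prodMk hd2
  rw [hd.fderiv]
  -- key evaluations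
  set u : ℝ × ℝ × ℝ × ℝ := (x.1, x.2.1, 0, 0) with hu
  set vv : ℝ × ℝ × ℝ × ℝ := (0, 0, w.re, -w.im) with hvv
  have hz1pow : z1 ^ (q - 1) * z1 = z1 ^ q := by
    rw [← pow_succ]; congr 1; omega
  have hL1u : L1 u = x.1 ^ 2 + x.2.1 ^ 2 := by
    simp [hL1, hu]; ring
  have hL2u : L2 u = 0 := by
    have : (ee1 u : ℂ) = z1 := by simp [hu, hz1]
    simp only [hL2, ContinuousLinearMap.comp_apply, ContinuousLinearMap.add_apply,
      ContinuousLinearMap.smul_apply, this]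
    have he2u : ee2 u = 0 := by simp [hu]
    rw [he2u]
    have : z2 • ((q : ℂ) * z1 ^ (q - 1)) • z1 = (q : ℂ) * (z1 ^ q * z2) := by
      rw [smul_eq_mul, smul_eq_mul]
      rw [mul_assoc, hz1pow]; ring
    rw [smul_zero, zero_add, this, ← hw]
    simp [Complex.mul_re, hΔ]
  have hL2v : L2 vv = w.re ^ 2 + w.im ^ 2 := by
    have he1v : ee1 vv = 0 := by simp [hvv]
    have he2v : ee2 vv = (w.re : ℂ) + Complex.I * (-w.im : ℝ) := by simp [hvv]
    simp only [hL2, ContinuousLinearMap.comp_apply, ContinuousLinearMap.add_apply,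
      ContinuousLinearMap.smul_apply, he1v, he2v, smul_zero, add_zero, smul_eq_mul]
    simp [Complex.mul_re, Complex.mul_im]
    ring
  -- surjectivity
  rintro ⟨a, b⟩
  set B : ℝ := w.re ^ 2 + w.im ^ 2 with hBdef
  set t : ℝ := b / B with ht
  set s : ℝ := (a - t * L1 vv) / (x.1 ^ 2 + x.2.1 ^ 2) with hs
  refine ⟨s • u + t • vv, ?_⟩
  have : (L1.prod L2) (s • u + t • vv)
      = (s * L1 u + t * L1 vv, s * L2 u + t * L2 vv) := by
    simp [ContinuousLinearMap.prod_apply, map_add, map_smul, smul_eq_mul]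
  rw [this, hL1u, hL2u, hL2v]
  have hAne : x.1 ^ 2 + x.2.1 ^ 2 ≠ 0 := ne_of_gt hA
  have hBne : B ≠ 0 := ne_of_gt hB
  refine Prod.ext ?_ ?_
  · show s * (x.1 ^ 2 + x.2.1 ^ 2) + t * L1 vv = a
    rw [hs]; field_simp; ring
  · show s * 0 + t * (w.re ^ 2 + w.im ^ 2) = b
    rw [ht]; field_simp [hBdef]; rw [← hBdef]; ring
end

section
/- If gradients of ΔH and H₂ (reduced) are parallel at a point of the reduced phase space with π4 = 0 and π3 ≠ 0, then p² π1 = σ q² π2. Consequently, when σ = −1 there is no such tangency point with π1, π2 > 0, so for σ = −1 the only critical values of the momentum map have Δh = 0. -/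
/-- if the level plane `π₃ = Δh/μ` is tangent to the
reduced phase space (i.e. the `π₁`-derivative of `π₁^q π₂^p` with
`π₂ = (h₂ − p π₁)/(σ q)` vanishes) at a point with `π₁, π₂ > 0`, then
`p² π₁ = σ q² π₂`.  Consequently, for `σ = -1` there is no such
tangency point with `π₁, π₂ > 0`. -/
theorem stmt10 (p q : ℕ) (hp : 0 < p) (hq : 0 < q) (hpq : Nat.Coprime p q)
    (σ h₂ π₁ π₂ : ℝ) (hσ : σ = 1 ∨ σ = -1)
    (hπ₂ : π₂ = (h₂ - p * π₁) / (σ * q))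
    (h1 : 0 < π₁) (h2 : 0 < π₂) :
    (deriv (fun x : ℝ => x ^ q * ((h₂ - p * x) / (σ * q)) ^ p) π₁ = 0 →
      (p : ℝ) ^ 2 * π₁ = σ * (q : ℝ) ^ 2 * π₂) ∧
    (σ = -1 →
      deriv (fun x : ℝ => x ^ q * ((h₂ - p * x) / (σ * q)) ^ p) π₁ ≠ 0) := by
  have hσ0 : σ ≠ 0 := by rcases hσ with h | h <;> simp [h]
  have hq0 : (q : ℝ) ≠ 0 := by positivity
  have hσq : σ * q ≠ 0 := mul_ne_zero hσ0 hq0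
  have hinner : HasDerivAt (fun x : ℝ => (h₂ - p * x) / (σ * q)) (-(p : ℝ) / (σ * q)) π₁ := by
    have h : HasDerivAt (fun x : ℝ => h₂ - p * x) (-(p : ℝ)) π₁ := by
      simpa using ((hasDerivAt_id π₁).const_mul (p : ℝ)).const_sub h₂
    exact h.div_const _
  have hD : HasDerivAt (fun x : ℝ => x ^ q * ((h₂ - p * x) / (σ * q)) ^ p)
      ((q : ℝ) * π₁ ^ (q - 1) * π₂ ^ p +
        π₁ ^ q * ((p : ℝ) * π₂ ^ (p - 1) * (-(p : ℝ) / (σ * q)))) π₁ := by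
    have h2' := hinner.pow p
    have := (hasDerivAt_pow q π₁).mul h2'
    rw [← hπ₂] at this
    have e : (fun x : ℝ => x ^ q * ((h₂ - p * x) / (σ * q)) ^ p) = (fun x : ℝ => x ^ q) * (fun x : ℝ => (h₂ - p * x) / (σ * q)) ^ p := rfl
    rw [e]
    simpa [← hπ₂] using this
  have hDval : deriv (fun x : ℝ => x ^ q * ((h₂ - p * x) / (σ * q)) ^ p) π₁ =
      (q : ℝ) * π₁ ^ (q - 1) * π₂ ^ p +
        π₁ ^ q * ((p : ℝ) * π₂ ^ (p - 1) * (-(p : ℝ) / (σ * q))) := hD.deriv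
  have hq1 : π₁ ^ q = π₁ ^ (q - 1) * π₁ := by
    rw [← pow_succ, Nat.sub_add_cancel hq]
  have hp1 : π₂ ^ p = π₂ ^ (p - 1) * π₂ := by
    rw [← pow_succ, Nat.sub_add_cancel hp]
  constructor
  · intro h0
    rw [hDval] at h0
    have hA : (0 : ℝ) < π₁ ^ (q - 1) * π₂ ^ (p - 1) := by positivity
    have key : ((p : ℝ) ^ 2 * π₁) * (π₁ ^ (q - 1) * π₂ ^ (p - 1)) =
        (σ * (q : ℝ) ^ 2 * π₂) * (π₁ ^ (q - 1) * π₂ ^ (p - 1)) := by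
      have hσ2 : σ * σ = 1 := by rcases hσ with h | h <;> rw [h] <;> norm_num
      rw [hq1, hp1] at h0
      field_simp at h0
      nlinarith [h0, hσ2]
    exact mul_right_cancel₀ (ne_of_gt hA) key
  · intro hs
    rw [hDval, hs]
    have : -(p : ℝ) / (-1 * q) = (p : ℝ) / q := by
      field_simp
    rw [this]
    have hpos : (0 : ℝ) < (q : ℝ) * π₁ ^ (q - 1) * π₂ ^ p +
        π₁ ^ q * ((p : ℝ) * π₂ ^ (p - 1) * ((p : ℝ) / q)) := by
      have hp0 : (0 : ℝ) < p := by positivity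
      have hq0' : (0 : ℝ) < q := by positivity
      positivity
    exact ne_of_gt hpos
end

section
/- For σ = +1 and h₂ > 0, the reduced phase space {(π1, π3, π4) : π3² + π4² = π1^q ((h₂ − p π1)/q)^p, 0 ≤ π1 ≤ h₂/p} is compact, while for σ = −1 and any h₂ the set {(π1, π3, π4) : π3² + π4² = π1^q ((p π1 − h₂)/q)^p, π1 ≥ max(0, h₂/p)} is unbounded (non-compact). -/
/-- for `σ = +1` and `h₂ > 0` the reduced phase space
`{(π₁,π₃,π₄) : π₃² + π₄² = π₁^q ((h₂ − p π₁)/q)^p, 0 ≤ π₁ ≤ h₂/p}` is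
compact, while for `σ = −1` and any `h₂` the set
`{(π₁,π₃,π₄) : π₃² + π₄² = π₁^q ((p π₁ − h₂)/q)^p, π₁ ≥ max(0, h₂/p)}`
is unbounded. -/
theorem stmt18 (p q : ℕ) (hp : 0 < p) (hq : 0 < q) (hpq : Nat.Coprime p q)
    (h₂ : ℝ) :
    (0 < h₂ → IsCompact {v : ℝ × ℝ × ℝ |
        v.2.1 ^ 2 + v.2.2 ^ 2 = v.1 ^ q * ((h₂ - p * v.1) / q) ^ p ∧
        0 ≤ v.1 ∧ v.1 ≤ h₂ / p}) ∧
    ¬ Bornology.IsBounded {v : ℝ × ℝ × ℝ |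
        v.2.1 ^ 2 + v.2.2 ^ 2 = v.1 ^ q * ((p * v.1 - h₂) / q) ^ p ∧
        max 0 (h₂ / p) ≤ v.1} := by
  constructor
  · intro hh
    set S := {v : ℝ × ℝ × ℝ |
        v.2.1 ^ 2 + v.2.2 ^ 2 = v.1 ^ q * ((h₂ - p * v.1) / q) ^ p ∧
        0 ≤ v.1 ∧ v.1 ≤ h₂ / p} with hS
    have hclosed : IsClosed S := by
      have h1 : IsClosed {v : ℝ × ℝ × ℝ |
          v.2.1 ^ 2 + v.2.2 ^ 2 = v.1 ^ q * ((h₂ - p * v.1) / q) ^ p} :=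
        isClosed_eq (by fun_prop) (by fun_prop)
      have h2 : IsClosed {v : ℝ × ℝ × ℝ | 0 ≤ v.1} :=
        isClosed_le continuous_const continuous_fst
      have h3 : IsClosed {v : ℝ × ℝ × ℝ | v.1 ≤ h₂ / p} :=
        isClosed_le continuous_fst continuous_const
      have : S = {v : ℝ × ℝ × ℝ |
          v.2.1 ^ 2 + v.2.2 ^ 2 = v.1 ^ q * ((h₂ - p * v.1) / q) ^ p} ∩
          ({v : ℝ × ℝ × ℝ | 0 ≤ v.1} ∩ {v : ℝ × ℝ × ℝ | v.1 ≤ h₂ / p}) := by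
        ext v; simp [hS, and_assoc]
      rw [this]
      exact h1.inter (h2.inter h3)
    set M : ℝ := (h₂ / p) ^ q * (h₂ / q) ^ p with hM
    have hMnn : 0 ≤ M := by positivity
    have key : ∀ v ∈ S, v.2.1 ^ 2 + v.2.2 ^ 2 ≤ M := by
      rintro v ⟨heq, h0, h1⟩
      rw [heq]
      have hp' : (0:ℝ) < p := by exact_mod_cast hp
      have hq' : (0:ℝ) < q := by exact_mod_cast hq
      have hple : (p : ℝ) * v.1 ≤ h₂ := by
        calc (p : ℝ) * v.1 ≤ (p : ℝ) * (h₂ / p) :=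
              mul_le_mul_of_nonneg_left h1 hp'.le
          _ = h₂ := by field_simp
      have hnum : 0 ≤ h₂ - (p : ℝ) * v.1 := by linarith
      have hpv : (0:ℝ) ≤ (p : ℝ) * v.1 := by positivity
      rw [hM]
      apply mul_le_mul
      · exact pow_le_pow_left₀ h0 h1 q
      · refine pow_le_pow_left₀ (by positivity) ?_ p
        apply div_le_div_of_nonneg_right _ hq'.le
        linarith
      · positivity
      · positivity
    have hsub : S ⊆ Set.Icc 0 (h₂ / p) ×ˢ
        (Set.Icc (-(Real.sqrt M)) (Real.sqrt M) ×ˢ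
         Set.Icc (-(Real.sqrt M)) (Real.sqrt M)) := by
      rintro v hv
      obtain ⟨heq, h0, h1⟩ := hv
      have hb := key v ⟨heq, h0, h1⟩
      have h3 : v.2.1 ^ 2 ≤ M := by nlinarith [sq_nonneg v.2.2]
      have h4 : v.2.2 ^ 2 ≤ M := by nlinarith [sq_nonneg v.2.1]
      have h3' : |v.2.1| ≤ Real.sqrt M := by
        rw [← Real.sqrt_sq_eq_abs]; exact Real.sqrt_le_sqrt h3
      have h4' : |v.2.2| ≤ Real.sqrt M := by
        rw [← Real.sqrt_sq_eq_abs]; exact Real.sqrt_le_sqrt h4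
      rw [abs_le] at h3' h4'
      exact ⟨⟨h0, h1⟩, ⟨h3'.1, h3'.2⟩, ⟨h4'.1, h4'.2⟩⟩
    exact IsCompact.of_isClosed_subset
      ((isCompact_Icc).prod ((isCompact_Icc).prod isCompact_Icc)) hclosed hsub
  · intro hb
    obtain ⟨C, hC⟩ := hb.exists_norm_le
    set t : ℝ := max (C + 1) (max 0 (h₂ / p)) with ht
    have ht0 : 0 ≤ t := le_trans (le_max_left 0 _) (le_max_right _ _)
    have htp : h₂ / p ≤ t := le_trans (le_max_right 0 _) (le_max_right _ _)
    have hnn : 0 ≤ (p * t - h₂) / q := by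
      apply div_nonneg _ (by positivity)
      have hp' : (0:ℝ) < p := by exact_mod_cast hp
      have : h₂ ≤ p * t := by
        rw [div_le_iff₀ hp'] at htp; linarith
      linarith
    set R : ℝ := t ^ q * ((p * t - h₂) / q) ^ p with hR
    have hRnn : 0 ≤ R := by positivity
    have hmem : ((t, (Real.sqrt R, 0)) : ℝ × ℝ × ℝ) ∈ {v : ℝ × ℝ × ℝ |
        v.2.1 ^ 2 + v.2.2 ^ 2 = v.1 ^ q * ((p * v.1 - h₂) / q) ^ p ∧
        max 0 (h₂ / p) ≤ v.1} := by
      constructor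
      · simp [Real.sq_sqrt hRnn, hR, Real.sq_sqrt (show (0:ℝ) ≤ t ^ q * ((p * t - h₂) / q) ^ p by rw [← hR]; exact hRnn)]
      · exact le_max_right _ _
    have := hC _ hmem
    have h1 : t ≤ ‖((t, (Real.sqrt R, 0)) : ℝ × ℝ × ℝ)‖ := by
      calc t = ‖t‖ := (Real.norm_of_nonneg ht0).symm
        _ ≤ _ := norm_fst_le ((t, (Real.sqrt R, 0)) : ℝ × ℝ × ℝ)
    have h2 : C + 1 ≤ t := le_max_left _ _
    linarith
end
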